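/- arXiv:0910.1228 — 2 statements merged into one kernel-verified Lean document; each statement's English description precedes it below -/
import Mathlib

section
/- Let $(X,d,\mu)$ be a doubling metric measure space with doubling constant $c_\mu$ and let $f\in\mathrm{BMO}(X)$. Then for every ball $B\subset X$ and every $\lambda>0$, $\mu(\{x\in B : |f(x)-f_B|>\lambda\}) \le c_1\,\mu(B)\,e^{-c_2\lambda/\|f\|_\sharp}$, where $c_1=4c_\mu^7$ and $c_2=(\log 2)/(2c_\mu^8)$ do not depend on $f$ and $\lambda$. -/
open MeasureTheory Metric Set ENNReal

/-- `(X, d, μ)` is a doubling metric measure space with doubling constant `cμ`: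
every ball has positive finite measure and `μ(2B) ≤ cμ · μ(B)` for all balls `B`. -/
def IsDoubling {X : Type*} [MetricSpace X] [MeasurableSpace X]
    (μ : Measure X) (cμ : ℝ) : Prop :=
  (∀ (x : X) (r : ℝ), 0 < r → 0 < μ (Metric.ball x r) ∧ μ (Metric.ball x r) < ⊤) ∧
  ∀ (x : X) (r : ℝ), 0 < r → μ (Metric.ball x (2 * r)) ≤ ENNReal.ofReal cμ * μ (Metric.ball x r)

/-- The set of mean oscillations `⨍_B |f - f_B| dμ` of `f` over all balls `B ⊆ X`. -/
def oscSet {X : Type*} [MetricSpace X] [MeasurableSpace X]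
    (μ : Measure X) (f : X → ℝ) : Set ℝ :=
  {t : ℝ | ∃ (x : X) (r : ℝ), 0 < r ∧
    t = ⨍ y in Metric.ball x r, |f y - ⨍ z in Metric.ball x r, f z ∂μ| ∂μ}

/-- The BMO seminorm `‖f‖_♯ = sup_B ⨍_B |f - f_B| dμ`. -/
noncomputable def bmoSeminorm {X : Type*} [MetricSpace X] [MeasurableSpace X]
    (μ : Measure X) (f : X → ℝ) : ℝ :=
  sSup (oscSet μ f)

/-!
Calderón–Zygmund stopping time. Let `K = ‖f‖_♯`, `S = 2 cμ⁴ (1 + cμ²) K` and `Δ = 2 cμ⁸ K`.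
At a Lebesgue point `x` of `E = {y ∈ B : |f y - f_B| > t + Δ}`, `B = ball x₀ R`, the averages of
`|f - f_B|` over `closedBall x r` exceed `S` for small `r` and are at most `S` for
`r ∈ (2R, 4R]`, so some radius `σ ≤ 2R` has average above `S` while `2σ` has average at most
`S`. A disjoint Vitali subfamily of these balls has total measure at most
`∫_{4B} |f - f_B| / S ≤ μ(B) / (2 cμ²)`, and on each enlarged ball `ball b (4σ)` the mean of
`f` is within `S + cμ K ≤ Δ` of `f_B`, so `E` is covered, up to a null set, by the
`{|f - f_{ball b (4σ)}| > t}`. Hence passing from level `t` to `t + Δ` halves the relative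
measure of the level sets, and `μ {y ∈ B : |f y - f_B| > nΔ} ≤ 2⁻ⁿ μ(B)`. When `cμ² < 2` the
space is a single point.
-/

open Filter Topology Function

section Average

variable {α : Type*} [MeasurableSpace α] {μ : Measure α}

theorem abs_setAverage_sub_le {f : α → ℝ} {s : Set α} (hs0 : μ s ≠ 0) (hs : μ s ≠ ∞)
    (hf : IntegrableOn f s μ) (c : ℝ) :
    |(⨍ y in s, f y ∂μ) - c| ≤ ⨍ y in s, |f y - c| ∂μ := by
  have hsub : (⨍ y in s, f y ∂μ) - c = ⨍ y in s, (f y - c) ∂μ := by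
    rw [setAverage_eq, setAverage_eq, integral_sub hf (integrableOn_const hs), setIntegral_const,
      smul_sub, smul_smul, inv_mul_cancel₀ ((measureReal_ne_zero_iff hs).2 hs0), one_smul]
  rw [hsub, setAverage_eq, setAverage_eq, smul_eq_mul, smul_eq_mul, abs_mul,
    abs_of_nonneg (by positivity)]
  gcongr
  exact abs_integral_le_integral_abs

theorem setAverage_abs_sub_nonneg (f : α → ℝ) (s : Set α) (c : ℝ) :
    0 ≤ ⨍ y in s, |f y - c| ∂μ := by
  rw [setAverage_eq, smul_eq_mul]
  exact mul_nonneg (by positivity) (integral_nonneg fun _ => abs_nonneg _)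

theorem abs_setAverage_sub_setAverage_le {f : α → ℝ} {s t : Set α} (hst : s ⊆ t) (hs0 : μ s ≠ 0)
    (ht : μ t ≠ ∞) (hf : IntegrableOn f t μ) :
    |(⨍ y in s, f y ∂μ) - ⨍ y in t, f y ∂μ| ≤
      μ.real t / μ.real s * ⨍ y in t, |f y - ⨍ z in t, f z ∂μ| ∂μ := by
  set c := ⨍ z in t, f z ∂μ
  have hs : μ s ≠ ∞ := ne_top_of_le_ne_top ht (measure_mono hst)
  have hg : IntegrableOn (fun y => |f y - c|) t μ := (hf.sub (integrableOn_const ht)).abs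
  calc |(⨍ y in s, f y ∂μ) - c| ≤ ⨍ y in s, |f y - c| ∂μ :=
        abs_setAverage_sub_le hs0 hs (hf.mono_set hst) c
    _ = (μ.real s)⁻¹ * ∫ y in s, |f y - c| ∂μ := by rw [setAverage_eq, smul_eq_mul]
    _ ≤ (μ.real s)⁻¹ * ∫ y in t, |f y - c| ∂μ := mul_le_mul_of_nonneg_left
        (setIntegral_mono_set hg (ae_of_all _ fun _ => abs_nonneg _) hst.eventuallyLE)
        (by positivity)
    _ = μ.real t / μ.real s * ⨍ y in t, |f y - c| ∂μ := by
        rw [← measure_smul_setAverage _ ht, smul_eq_mul]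
        ring

theorem ofReal_mul_tsum_measure_le {ι : Type*} [Countable ι] {g : α → ℝ} {s : ι → Set α}
    {V : Set α} {S : ℝ} (hS : 0 ≤ S) (hg : ∀ x, 0 ≤ g x) (hgV : IntegrableOn g V μ)
    (hV : μ V ≠ ∞) (hs : ∀ i, MeasurableSet (s i)) (hd : Pairwise (Disjoint on s))
    (hsV : ∀ i, s i ⊆ V) (hS_le : ∀ i, S ≤ ⨍ x in s i, g x ∂μ) :
    ENNReal.ofReal S * ∑' i, μ (s i) ≤ ENNReal.ofReal (∫ x in V, g x ∂μ) := by
  have hpiece : ∀ i, ENNReal.ofReal S * μ (s i) ≤ ∫⁻ x in s i, ENNReal.ofReal (g x) ∂μ := by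
    intro i
    have hsi : μ (s i) ≠ ∞ := ne_top_of_le_ne_top hV (measure_mono (hsV i))
    rw [← ofReal_measureReal hsi, ← ENNReal.ofReal_mul hS,
      ← ofReal_integral_eq_lintegral_ofReal (hgV.mono_set (hsV i)) (ae_of_all _ hg),
      ← measure_smul_setAverage _ hsi, smul_eq_mul, mul_comm]
    exact ENNReal.ofReal_le_ofReal (mul_le_mul_of_nonneg_left (hS_le i) measureReal_nonneg)
  calc ENNReal.ofReal S * ∑' i, μ (s i) = ∑' i, ENNReal.ofReal S * μ (s i) :=
        ENNReal.tsum_mul_left.symm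
    _ ≤ ∑' i, ∫⁻ x in s i, ENNReal.ofReal (g x) ∂μ := ENNReal.tsum_le_tsum hpiece
    _ = ∫⁻ x in ⋃ i, s i, ENNReal.ofReal (g x) ∂μ := (lintegral_iUnion hs hd _).symm
    _ ≤ ∫⁻ x in V, ENNReal.ofReal (g x) ∂μ := lintegral_mono_set (iUnion_subset hsV)
    _ = ENNReal.ofReal (∫ x in V, g x ∂μ) :=
        (ofReal_integral_eq_lintegral_ofReal hgV (ae_of_all _ hg)).symm

end Average

theorem exists_stopping_radius {φ : ℝ → ℝ} {S ρ : ℝ} (hρ : 0 < ρ)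
    (hsmall : ∀ᶠ r in 𝓝[>] 0, S < φ r) (hlarge : ∀ r ∈ Ioc ρ (2 * ρ), φ r ≤ S) :
    ∃ σ ∈ Ioc 0 ρ, S < φ σ ∧ φ (2 * σ) ≤ S := by
  obtain ⟨r, hSr, hr0, hrρ⟩ := (hsmall.and (Ioc_mem_nhdsGT hρ)).exists
  by_contra! hstop
  have hgrow : ∀ k : ℕ, 2 ^ k * r ≤ ρ → S < φ (2 ^ k * r) := by
    intro k
    induction k with
    | zero => simpa using fun _ => hSr
    | succ k ih =>
      intro hk
      have hk' : 2 ^ k * r ≤ ρ := by rw [pow_succ] at hk; nlinarith [pow_pos (two_pos (α := ℝ)) k]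
      rw [pow_succ, mul_comm _ (2 : ℝ), mul_assoc]
      exact hstop _ ⟨by positivity, hk'⟩ (ih hk')
  obtain ⟨k, hk, hk'⟩ := exists_nat_pow_near ((one_le_div hr0).2 hrρ) one_lt_two
  rw [le_div_iff₀ hr0] at hk
  rw [div_lt_iff₀ hr0, pow_succ, mul_comm _ (2 : ℝ), mul_assoc] at hk'
  exact (hlarge _ ⟨hk', by linarith⟩).not_gt (hstop _ ⟨by positivity, hk⟩ (hgrow k hk))

theorem pow_three_mul_one_add_pow_three_le {c : ℝ} (hc : 1 ≤ c) :
    c ^ 3 * (1 + c ^ 3) ≤ 2 * c ^ 4 * (1 + c ^ 2) := by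
  nlinarith [pow_le_pow_right₀ hc (by norm_num : 3 ≤ 4), pow_pos (by linarith : 0 < c) 6]

theorem two_mul_pow_four_mul_one_add_sq_add_le {c : ℝ} (hc : 1 ≤ c) (hc2 : 2 ≤ c ^ 2) :
    2 * c ^ 4 * (1 + c ^ 2) + c ≤ 2 * c ^ 8 := by
  have h2 := sub_nonneg.2 hc2
  calc 2 * c ^ 4 * (1 + c ^ 2) + c ≤ 2 * (c ^ 2) ^ 2 + 2 * (c ^ 2) ^ 3 + c ^ 2 := by
        ring_nf; nlinarith
    _ ≤ 2 * (c ^ 2) ^ 4 := by nlinarith [mul_nonneg (mul_nonneg h2 h2) h2, sq_nonneg (c ^ 2)]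
    _ = 2 * c ^ 8 := by ring

theorem exists_countable_disjoint_closedBall_cover {X : Type*} [MetricSpace X]
    [TopologicalSpace.SeparableSpace X] (t : Set X) (σ : X → ℝ) (R : ℝ)
    (hσ : ∀ x ∈ t, σ x ∈ Ioc 0 R) :
    ∃ u ⊆ t, u.Countable ∧ u.PairwiseDisjoint (fun x => closedBall x (σ x)) ∧
      ∀ x ∈ t, ∃ b ∈ u, x ∈ ball b (4 * σ b) := by
  obtain ⟨u, hut, hdisj, hcover⟩ := Vitali.exists_disjoint_subfamily_covering_enlargement
    (fun x => closedBall x (σ x)) t σ 2 one_lt_two (fun x hx => (hσ x hx).1.le) R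
    (fun x hx => (hσ x hx).2) fun x hx => nonempty_closedBall.2 (hσ x hx).1.le
  refine ⟨u, hut, hdisj.countable_of_nonempty_interior fun b hb =>
    ⟨b, ball_subset_interior_closedBall (mem_ball_self (hσ b (hut hb)).1)⟩, hdisj, fun x hx => ?_⟩
  obtain ⟨b, hbu, ⟨z, hzx, hzb⟩, hσxb⟩ := hcover x hx
  refine ⟨b, hbu, ?_⟩
  rw [mem_closedBall] at hzx hzb
  rw [mem_ball]
  linarith [dist_triangle x z b, dist_comm x z, (hσ b (hut hbu)).1]

section Doubling

variable {X : Type*} [MetricSpace X] [MeasurableSpace X] {μ : Measure X} {cμ : ℝ}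

namespace IsDoubling

theorem measure_ball_pos (h : IsDoubling μ cμ) (x : X) {r : ℝ} (hr : 0 < r) :
    0 < μ (ball x r) :=
  (h.1 x r hr).1

theorem measure_ball_lt_top (h : IsDoubling μ cμ) (x : X) (r : ℝ) : μ (ball x r) < ∞ :=
  (measure_mono (ball_subset_ball (le_max_left r 1))).trans_lt
    (h.1 x _ (lt_of_lt_of_le one_pos (le_max_right r 1))).2

theorem measure_closedBall_pos (h : IsDoubling μ cμ) (x : X) {r : ℝ} (hr : 0 < r) :
    0 < μ (closedBall x r) :=
  (h.measure_ball_pos x hr).trans_le (measure_mono ball_subset_closedBall)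

theorem measure_closedBall_lt_top (h : IsDoubling μ cμ) (x : X) (r : ℝ) :
    μ (closedBall x r) < ∞ :=
  (measure_mono (closedBall_subset_ball (lt_add_one r))).trans_lt (h.measure_ball_lt_top x _)

theorem measure_ball_le_pow (h : IsDoubling μ cμ) (hc : 0 ≤ cμ) (x : X) {r r' : ℝ}
    (hr : 0 < r) (m : ℕ) (hr' : r' ≤ 2 ^ m * r) :
    μ (ball x r') ≤ ENNReal.ofReal (cμ ^ m) * μ (ball x r) := by
  induction m generalizing r' with
  | zero => simpa using measure_mono (ball_subset_ball (by simpa using hr'))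
  | succ m ih =>
    calc μ (ball x r') ≤ μ (ball x (2 * (2 ^ m * r))) :=
          measure_mono (ball_subset_ball (by rw [pow_succ] at hr'; linarith))
      _ ≤ ENNReal.ofReal cμ * (ENNReal.ofReal (cμ ^ m) * μ (ball x r)) := by
          grw [h.2 x _ (by positivity), ih le_rfl]
      _ = ENNReal.ofReal (cμ ^ (m + 1)) * μ (ball x r) := by
          rw [← mul_assoc, ← ENNReal.ofReal_mul hc, pow_succ', mul_comm]

theorem totallyBounded_ball [OpensMeasurableSpace X] (h : IsDoubling μ cμ) (hc : 0 < cμ)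
    (x₀ : X) {ν : ℝ} (hν : 0 < ν) : TotallyBounded (ball x₀ ν) := by
  refine Metric.totallyBounded_iff.2 fun ε hε => ?_
  -- otherwise an infinite `ε`-separated sequence `u` gives infinitely many disjoint balls
  -- `ball (u k) (ε / 2)` in `ball x₀ (ν + ε)`, whose measures are bounded below by doubling
  by_contra! hnet
  obtain ⟨u, hu_mem, hu_sep⟩ := exists_seq_of_forall_finset_exists (· ∈ ball x₀ ν)
    (fun x y => ε ≤ dist x y) fun t _ => by
      obtain ⟨y, hy, hyt⟩ := not_subset.1 (hnet t t.finite_toSet)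
      simp only [Finset.mem_coe, mem_iUnion, mem_ball, not_exists, not_lt] at hyt
      exact ⟨y, hy, fun x hx => dist_comm y x ▸ hyt x hx⟩
  obtain ⟨m, hm⟩ := pow_unbounded_of_one_lt (4 * ν / ε) one_lt_two
  have hlow : ∀ k, μ (ball x₀ ν) / ENNReal.ofReal (cμ ^ m) ≤ μ (ball (u k) (ε / 2)) := by
    intro k
    rw [ENNReal.div_le_iff_le_mul (.inl (by simpa using pow_pos hc m))
      (.inl ENNReal.ofReal_ne_top), mul_comm]
    calc μ (ball x₀ ν) ≤ μ (ball (u k) (2 * ν)) := measure_mono fun z hz => by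
          have := hu_mem k
          rw [mem_ball] at hz this ⊢
          linarith [dist_triangle z x₀ (u k), dist_comm x₀ (u k)]
      _ ≤ _ := h.measure_ball_le_pow hc.le _ (by positivity) m
          (by rw [div_lt_iff₀ hε] at hm; linarith)
  have hdisj : Pairwise (Disjoint on fun k => ball (u k) (ε / 2)) := by
    intro i j hij
    refine ball_disjoint_ball ?_
    rcases hij.lt_or_gt with hlt | hlt
    · linarith [hu_sep i j hlt, dist_comm (u i) (u j)]
    · linarith [hu_sep j i hlt, dist_comm (u i) (u j)]
  have hsub : (⋃ k, ball (u k) (ε / 2)) ⊆ ball x₀ (ν + ε) :=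
    iUnion_subset fun k z hz => by
      have := hu_mem k
      rw [mem_ball] at hz this ⊢
      linarith [dist_triangle z (u k) x₀]
  refine infinite_univ ((Measure.finite_const_le_meas_of_disjoint_iUnion μ ?_
    (fun _ => measurableSet_ball) hdisj (ne_top_of_le_ne_top (h.measure_ball_lt_top x₀ _).ne
      (measure_mono hsub))).subset fun k _ => hlow k)
  exact ENNReal.div_pos (h.measure_ball_pos x₀ hν).ne' ENNReal.ofReal_ne_top

theorem secondCountableTopology [OpensMeasurableSpace X] (h : IsDoubling μ cμ) (hc : 0 < cμ) :
    SecondCountableTopology X := by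
  rcases isEmpty_or_nonempty X with hX | ⟨⟨x₀⟩⟩
  · infer_instance
  have huniv : (univ : Set X) = ⋃ n : ℕ, ball x₀ (n + 1) :=
    (iUnion_ball_nat_succ x₀).symm
  have : TopologicalSpace.SeparableSpace X := by
    rw [← TopologicalSpace.isSeparable_univ_iff, huniv]
    exact .iUnion fun n => (h.totallyBounded_ball hc x₀ n.cast_add_one_pos).isSeparable
  exact UniformSpace.secondCountable_of_separable X

theorem isUnifLocDoublingMeasure (h : IsDoubling μ cμ) (hc : 0 ≤ cμ) :
    IsUnifLocDoublingMeasure μ := by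
  refine ⟨⟨(cμ ^ 2).toNNReal, eventually_nhdsWithin_of_forall fun ε (hε : 0 < ε) x => ?_⟩⟩
  calc μ (closedBall x (2 * ε)) ≤ μ (ball x (2 ^ 2 * ε)) :=
        measure_mono (closedBall_subset_ball (by linarith))
    _ ≤ ENNReal.ofReal (cμ ^ 2) * μ (ball x ε) := h.measure_ball_le_pow hc x hε 2 le_rfl
    _ ≤ _ := by
        rw [ENNReal.ofReal]
        exact mul_le_mul_right (measure_mono ball_subset_closedBall) _

theorem isLocallyFiniteMeasure (h : IsDoubling μ cμ) : IsLocallyFiniteMeasure μ :=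
  ⟨fun x => ⟨ball x 1, ball_mem_nhds x one_pos, h.measure_ball_lt_top x 1⟩⟩

theorem ae_tendsto_setAverage_closedBall [BorelSpace X] (h : IsDoubling μ cμ) (hc : 0 < cμ)
    {g : X → ℝ} (hg : ∀ x r, IntegrableOn g (ball x r) μ) :
    ∀ᵐ x ∂μ, Tendsto (fun r => ⨍ y in closedBall x r, g y ∂μ) (𝓝[>] 0) (𝓝 (g x)) := by
  have := h.secondCountableTopology hc
  have := h.isUnifLocDoublingMeasure hc.le
  have := h.isLocallyFiniteMeasure
  have hloc : LocallyIntegrable g μ := fun x => ⟨ball x 1, ball_mem_nhds x one_pos, hg x 1⟩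
  filter_upwards [IsUnifLocDoublingMeasure.ae_tendsto_average μ hloc 1] with x hx
  exact hx (fun _ => x) id tendsto_id <| eventually_nhdsWithin_of_forall fun r (hr : 0 < r) =>
    mem_closedBall_self (by simpa using hr.le)

theorem subsingleton_of_sq_lt_two [OpensMeasurableSpace X] (h : IsDoubling μ cμ) (hc : 0 ≤ cμ)
    (hlt : cμ ^ 2 < 2) : Subsingleton X := by
  refine ⟨fun x y => by_contra fun hxy => hlt.not_ge ?_⟩
  set d := dist x y
  have hd : 0 < d := dist_pos.2 hxy
  set a := μ (ball x (d / 2))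
  set b := μ (ball y (d / 2))
  -- both disjoint half-balls lie in `ball x (2 * d)` and in `ball y (2 * d)`, so summing the two
  -- doubling bounds gives `2 (a + b) ≤ cμ² (a + b)`
  have hsum : ∀ z, dist x z ≤ d → dist y z ≤ d →
      a + b ≤ ENNReal.ofReal (cμ ^ 2) * μ (ball z (d / 2)) := by
    intro z hxz hyz
    rw [← measure_union (ball_disjoint_ball (by linarith)) measurableSet_ball]
    refine (measure_mono fun w hw => ?_).trans
      (h.measure_ball_le_pow hc z (half_pos hd) 2 (by linarith : 2 * d ≤ 2 ^ 2 * (d / 2)))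
    rcases hw with hw | hw <;> rw [mem_ball] at hw ⊢
    · linarith [dist_triangle w x z]
    · linarith [dist_triangle w y z]
  have hab : a + b ≠ 0 := ((h.measure_ball_pos x (half_pos hd)).trans_le le_self_add).ne'
  have hab' : a + b ≠ ∞ := ENNReal.add_ne_top.2
    ⟨(h.measure_ball_lt_top _ _).ne, (h.measure_ball_lt_top _ _).ne⟩
  have h2 : 2 * (a + b) ≤ ENNReal.ofReal (cμ ^ 2) * (a + b) := by
    calc 2 * (a + b) = (a + b) + (a + b) := two_mul _
      _ ≤ ENNReal.ofReal (cμ ^ 2) * a + ENNReal.ofReal (cμ ^ 2) * b :=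
          add_le_add (hsum x (by simp [hd.le]) (by rw [dist_comm]))
            (hsum y le_rfl (by simp [hd.le]))
      _ = _ := (mul_add _ _ _).symm
  have := (ENNReal.mul_le_mul_iff_left hab hab').1 h2
  rwa [← ENNReal.ofReal_ofNat, ENNReal.ofReal_le_ofReal_iff (by positivity)] at this

end IsDoubling

def MeanOscillationLE (μ : Measure X) (f : X → ℝ) (K : ℝ) : Prop :=
  ∀ (x : X) (r : ℝ), 0 < r → ⨍ y in ball x r, |f y - ⨍ z in ball x r, f z ∂μ| ∂μ ≤ K

theorem meanOscillationLE_bmoSeminorm {f : X → ℝ} (hbmo : BddAbove (oscSet μ f)) :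
    MeanOscillationLE μ f (bmoSeminorm μ f) :=
  fun x r hr => le_csSup hbmo ⟨x, r, hr, rfl⟩

def oscLevelSet (μ : Measure X) (f : X → ℝ) (x : X) (r t : ℝ) : Set X :=
  {y ∈ ball x r | t < |f y - ⨍ z in ball x r, f z ∂μ|}

theorem oscLevelSet_eq_empty [Subsingleton X] {f : X → ℝ} {x : X} {r t : ℝ}
    (h0 : μ (ball x r) ≠ 0) (htop : μ (ball x r) ≠ ∞) (ht : 0 ≤ t) :
    oscLevelSet μ f x r t = ∅ := by
  refine eq_empty_of_forall_notMem fun y hy => ?_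
  have hconst : f = fun _ => f y := funext fun z => congrArg f (Subsingleton.elim z y)
  have hlt := hy.2
  rw [hconst, setAverage_const h0 htop, sub_self, abs_zero] at hlt
  exact hlt.not_ge ht

namespace IsDoubling

variable {f : X → ℝ} {K : ℝ}

theorem abs_setAverage_sub_setAverage_ball_le (h : IsDoubling μ cμ)
    (hf : ∀ x r, IntegrableOn f (ball x r) μ) (hosc : MeanOscillationLE μ f K)
    {s : Set X} {x : X} {r ρ : ℝ} (hr : 0 < r) (hs : s ⊆ ball x r) (hs0 : μ s ≠ 0) (hρ0 : 0 ≤ ρ)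
    (hρ : μ (ball x r) ≤ ENNReal.ofReal ρ * μ s) :
    |(⨍ y in s, f y ∂μ) - ⨍ y in ball x r, f y ∂μ| ≤ ρ * K := by
  have hB := (h.measure_ball_lt_top x r).ne
  have hs' : μ s ≠ ∞ := ne_top_of_le_ne_top hB (measure_mono hs)
  have hratio : μ.real (ball x r) / μ.real s ≤ ρ := by
    rw [div_le_iff₀ (((measureReal_ne_zero_iff hs').2 hs0).lt_of_le' measureReal_nonneg)]
    refine ENNReal.toReal_le_of_le_ofReal (by positivity) ?_
    rwa [ENNReal.ofReal_mul hρ0, ofReal_measureReal hs']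
  calc _ ≤ _ := abs_setAverage_sub_setAverage_le hs hs0 hB (hf x r)
    _ ≤ ρ * K := mul_le_mul hratio (hosc x r hr) (setAverage_abs_sub_nonneg _ _ _) hρ0

theorem integral_ball_abs_sub_setAverage_le (h : IsDoubling μ cμ)
    (hf : ∀ x r, IntegrableOn f (ball x r) μ) (hosc : MeanOscillationLE μ f K)
    {s : Set X} {x : X} {r ρ : ℝ} (hr : 0 < r) (hs : s ⊆ ball x r) (hs0 : μ s ≠ 0) (hρ0 : 0 ≤ ρ)
    (hρ : μ (ball x r) ≤ ENNReal.ofReal ρ * μ s) :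
    ∫ y in ball x r, |f y - ⨍ z in s, f z ∂μ| ∂μ ≤ ρ * (1 + ρ) * K * μ.real s := by
  set c := ⨍ z in s, f z ∂μ
  set a := ⨍ z in ball x r, f z ∂μ
  have hB := (h.measure_ball_lt_top x r).ne
  have hs' : μ s ≠ ∞ := ne_top_of_le_ne_top hB (measure_mono hs)
  have hμ : μ.real (ball x r) ≤ ρ * μ.real s := by
    refine ENNReal.toReal_le_of_le_ofReal (by positivity) ?_
    rwa [ENNReal.ofReal_mul hρ0, ofReal_measureReal hs']
  have hac : |a - c| ≤ ρ * K := by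
    rw [abs_sub_comm]
    exact h.abs_setAverage_sub_setAverage_ball_le hf hosc hr hs hs0 hρ0 hρ
  have hfa : IntegrableOn (fun y => |f y - a|) (ball x r) μ :=
    ((hf x r).sub (integrableOn_const hB)).abs
  calc ∫ y in ball x r, |f y - c| ∂μ ≤ ∫ y in ball x r, (|f y - a| + |a - c|) ∂μ :=
        integral_mono ((hf x r).sub (integrableOn_const hB)).abs
          (hfa.add (integrableOn_const hB)) fun y => abs_sub_le (f y) a c
    _ = μ.real (ball x r) * (⨍ y in ball x r, |f y - a| ∂μ + |a - c|) := by
        rw [integral_add hfa (integrableOn_const hB), setIntegral_const,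
          ← measure_smul_setAverage _ hB, smul_eq_mul, smul_eq_mul, mul_add]
    _ ≤ (ρ * μ.real s) * (K + ρ * K) :=
        mul_le_mul hμ (add_le_add (hosc x r hr) hac)
          (add_nonneg (setAverage_abs_sub_nonneg _ _ _) (abs_nonneg _)) (by positivity)
    _ = ρ * (1 + ρ) * K * μ.real s := by ring

theorem setAverage_closedBall_abs_sub_le (h : IsDoubling μ cμ) (hc : 0 ≤ cμ)
    (hf : ∀ x r, IntegrableOn f (ball x r) μ) (hosc : MeanOscillationLE μ f K)
    {x₀ x : X} {R τ : ℝ} (hR : 0 < R) (hx : x ∈ ball x₀ R) (hτ : τ ∈ Ioc (2 * R) (4 * R)) :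
    ⨍ y in closedBall x τ, |f y - ⨍ z in ball x₀ R, f z ∂μ| ∂μ ≤ cμ ^ 3 * (1 + cμ ^ 3) * K := by
  set g := fun y => |f y - ⨍ z in ball x₀ R, f z ∂μ|
  rw [mem_ball] at hx
  have hBτ : ball x₀ R ⊆ closedBall x τ := fun z hz => by
    rw [mem_ball] at hz
    rw [mem_closedBall]
    linarith [dist_triangle z x₀ x, dist_comm x x₀, hτ.1]
  have hτ5 : closedBall x τ ⊆ ball x₀ (5 * R) := fun z hz => by
    rw [mem_closedBall] at hz
    rw [mem_ball]
    linarith [dist_triangle z x x₀, hτ.2]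
  have hB0 : 0 < μ.real (ball x₀ R) :=
    ENNReal.toReal_pos (h.measure_ball_pos x₀ hR).ne' (h.measure_ball_lt_top x₀ R).ne
  have h5 : μ (ball x₀ (5 * R)) ≤ ENNReal.ofReal (cμ ^ 3) * μ (ball x₀ R) :=
    h.measure_ball_le_pow hc x₀ hR 3 (by linarith)
  have hint := h.integral_ball_abs_sub_setAverage_le hf hosc (by positivity)
    (ball_subset_ball (by linarith)) (h.measure_ball_pos x₀ hR).ne' (by positivity) h5
  have hg5 : IntegrableOn g (ball x₀ (5 * R)) μ :=
    ((hf x₀ _).sub (integrableOn_const (h.measure_ball_lt_top x₀ _).ne)).abs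
  calc ⨍ y in closedBall x τ, g y ∂μ
        = (μ.real (closedBall x τ))⁻¹ * ∫ y in closedBall x τ, g y ∂μ := by
          rw [setAverage_eq, smul_eq_mul]
    _ ≤ (μ.real (ball x₀ R))⁻¹ * ∫ y in ball x₀ (5 * R), g y ∂μ :=
        mul_le_mul (inv_anti₀ hB0 (measureReal_mono hBτ (h.measure_closedBall_lt_top x τ).ne))
          (setIntegral_mono_set hg5 (ae_of_all _ fun _ => abs_nonneg _) hτ5.eventuallyLE)
          (integral_nonneg fun _ => abs_nonneg _) (by positivity)
    _ ≤ (μ.real (ball x₀ R))⁻¹ * (cμ ^ 3 * (1 + cμ ^ 3) * K * μ.real (ball x₀ R)) := by gcongr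
    _ = cμ ^ 3 * (1 + cμ ^ 3) * K := by field_simp

theorem ae_exists_stopping_radius [BorelSpace X] (h : IsDoubling μ cμ) (hc : 0 < cμ)
    (hf : ∀ x r, IntegrableOn f (ball x r) μ) (hosc : MeanOscillationLE μ f K)
    {x₀ : X} {R S t : ℝ} (hR : 0 < R) (hS : cμ ^ 3 * (1 + cμ ^ 3) * K ≤ S) (hSt : S ≤ t) :
    ∀ᵐ x ∂μ, x ∈ oscLevelSet μ f x₀ R t → ∃ σ ∈ Ioc 0 (2 * R),
      S < ⨍ y in closedBall x σ, |f y - ⨍ z in ball x₀ R, f z ∂μ| ∂μ ∧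
      ⨍ y in closedBall x (2 * σ), |f y - ⨍ z in ball x₀ R, f z ∂μ| ∂μ ≤ S := by
  have hg : ∀ x r, IntegrableOn (fun y => |f y - ⨍ z in ball x₀ R, f z ∂μ|) (ball x r) μ :=
    fun x r => ((hf x r).sub (integrableOn_const (h.measure_ball_lt_top x r).ne)).abs
  filter_upwards [h.ae_tendsto_setAverage_closedBall hc hg] with x hlim hx
  refine exists_stopping_radius (by positivity) (hlim.eventually (lt_mem_nhds ?_)) ?_
  · exact hSt.trans_lt hx.2
  · exact fun τ hτ => (h.setAverage_closedBall_abs_sub_le hc.le hf hosc hR hx.1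
      ⟨hτ.1, by linarith [hτ.2]⟩).trans hS

theorem mem_oscLevelSet_of_setAverage_le (h : IsDoubling μ cμ) (hc : 0 ≤ cμ)
    (hf : ∀ x r, IntegrableOn f (ball x r) μ) (hosc : MeanOscillationLE μ f K)
    {a b : X} {σ S t Δ c : ℝ} (hσ : 0 < σ) (hΔ : S + cμ * K ≤ Δ) (ha : a ∈ ball b (4 * σ))
    (hfa : t + Δ < |f a - c|) (hS : ⨍ y in closedBall b (2 * σ), |f y - c| ∂μ ≤ S) :
    a ∈ oscLevelSet μ f b (4 * σ) t := by
  set A := ⨍ z in ball b (4 * σ), f z ∂μ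
  set A' := ⨍ z in closedBall b (2 * σ), f z ∂μ
  have hA'0 := (h.measure_closedBall_pos b (by positivity : 0 < 2 * σ)).ne'
  have hA'A : |A' - A| ≤ cμ * K := by
    refine h.abs_setAverage_sub_setAverage_ball_le hf hosc (by positivity)
      (closedBall_subset_ball (by linarith)) hA'0 hc ?_
    calc μ (ball b (4 * σ)) ≤ ENNReal.ofReal (cμ ^ 1) * μ (ball b (2 * σ)) :=
          h.measure_ball_le_pow hc b (by positivity) 1 (by linarith)
      _ ≤ ENNReal.ofReal cμ * μ (closedBall b (2 * σ)) := by
          rw [pow_one]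
          exact mul_le_mul_right (measure_mono ball_subset_closedBall) _
  have hA'c : |A' - c| ≤ S := (abs_setAverage_sub_le hA'0 (h.measure_closedBall_lt_top _ _).ne
    (hf b (2 * σ + 1) |>.mono_set (closedBall_subset_ball (lt_add_one _))) c).trans hS
  refine ⟨ha, ?_⟩
  rw [abs_sub_comm] at hA'A
  linarith [abs_sub_le (f a) A c, abs_sub_le A A' c]

theorem tsum_measure_ball_le [OpensMeasurableSpace X] (h : IsDoubling μ cμ) (hc : 0 < cμ)
    (hf : ∀ x r, IntegrableOn f (ball x r) μ) (hosc : MeanOscillationLE μ f K) (hK : 0 < K)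
    {x₀ : X} {R : ℝ} (hR : 0 < R) {u : Set X} [Countable u] {σ : X → ℝ}
    (hσ : ∀ b ∈ u, 0 < σ b) (hdisj : u.PairwiseDisjoint fun b => closedBall b (σ b))
    (hsub : ∀ b ∈ u, closedBall b (σ b) ⊆ ball x₀ (4 * R))
    (havg : ∀ b ∈ u, 2 * cμ ^ 4 * (1 + cμ ^ 2) * K ≤
      ⨍ y in closedBall b (σ b), |f y - ⨍ z in ball x₀ R, f z ∂μ| ∂μ) :
    ∑' b : u, μ (ball b (4 * σ b)) ≤ 2⁻¹ * μ (ball x₀ R) := by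
  set S := 2 * cμ ^ 4 * (1 + cμ ^ 2) * K
  set I := ∫ y in ball x₀ (4 * R), |f y - ⨍ z in ball x₀ R, f z ∂μ| ∂μ
  have h4 : μ (ball x₀ (4 * R)) ≤ ENNReal.ofReal (cμ ^ 2) * μ (ball x₀ R) :=
    h.measure_ball_le_pow hc.le x₀ hR 2 (by linarith)
  have hI : I ≤ cμ ^ 2 * (1 + cμ ^ 2) * K * μ.real (ball x₀ R) :=
    h.integral_ball_abs_sub_setAverage_le hf hosc (by positivity) (ball_subset_ball (by linarith))
      (h.measure_ball_pos x₀ hR).ne' (by positivity) h4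
  have hpack : ENNReal.ofReal S * ∑' b : u, μ (closedBall b (σ b)) ≤ ENNReal.ofReal I :=
    ofReal_mul_tsum_measure_le (by positivity) (fun _ => abs_nonneg _)
      ((hf x₀ _).sub (integrableOn_const (h.measure_ball_lt_top x₀ _).ne)).abs
      (h.measure_ball_lt_top x₀ _).ne (fun _ => measurableSet_closedBall)
      (fun b b' hbb' => hdisj b.2 b'.2 (Subtype.coe_ne_coe.2 hbb')) (fun b => hsub b b.2)
      (fun b => havg b b.2)
  calc ∑' b : u, μ (ball b (4 * σ b))
      ≤ ∑' b : u, ENNReal.ofReal (cμ ^ 2) * μ (closedBall b (σ b)) :=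
        ENNReal.tsum_le_tsum fun b =>
          (h.measure_ball_le_pow hc.le b (hσ b b.2) 2 (by linarith)).trans
            (mul_le_mul_right (measure_mono ball_subset_closedBall) _)
    _ = ENNReal.ofReal (cμ ^ 2 / S) * (ENNReal.ofReal S * ∑' b : u, μ (closedBall b (σ b))) := by
        rw [ENNReal.tsum_mul_left, ← mul_assoc, ← ENNReal.ofReal_mul (by positivity),
          div_mul_cancel₀ _ (by positivity)]
    _ ≤ ENNReal.ofReal (cμ ^ 2 / S) * ENNReal.ofReal I := by gcongr
    _ ≤ ENNReal.ofReal (2⁻¹ * μ.real (ball x₀ R)) := by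
        rw [← ENNReal.ofReal_mul (by positivity)]
        refine ENNReal.ofReal_le_ofReal ?_
        calc cμ ^ 2 / S * I ≤ cμ ^ 2 / S * (cμ ^ 2 * (1 + cμ ^ 2) * K * μ.real (ball x₀ R)) := by
              gcongr
          _ = 2⁻¹ * μ.real (ball x₀ R) := by
              simp only [S]
              field_simp
    _ = 2⁻¹ * μ (ball x₀ R) := by
        rw [ENNReal.ofReal_mul (by norm_num), ofReal_measureReal (h.measure_ball_lt_top x₀ R).ne,
          ENNReal.ofReal_inv_of_pos two_pos, ENNReal.ofReal_ofNat]

theorem measure_oscLevelSet_add_le [BorelSpace X] (h : IsDoubling μ cμ) (hc : 0 < cμ)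
    (hc2 : 2 ≤ cμ ^ 2) (hf : ∀ x r, IntegrableOn f (ball x r) μ) (hosc : MeanOscillationLE μ f K)
    (hK : 0 < K) {t : ℝ} (ht : 0 ≤ t) {a : ℝ≥0∞}
    (hind : ∀ x r, 0 < r → μ (oscLevelSet μ f x r t) ≤ a * μ (ball x r))
    {x₀ : X} {R : ℝ} (hR : 0 < R) :
    μ (oscLevelSet μ f x₀ R (t + 2 * cμ ^ 8 * K)) ≤ a * (2⁻¹ * μ (ball x₀ R)) := by
  set S := 2 * cμ ^ 4 * (1 + cμ ^ 2) * K
  set E := oscLevelSet μ f x₀ R (t + 2 * cμ ^ 8 * K)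
  have hc1 : 1 ≤ cμ := by nlinarith
  have hS : cμ ^ 3 * (1 + cμ ^ 3) * K ≤ S :=
    mul_le_mul_of_nonneg_right (pow_three_mul_one_add_pow_three_le hc1) hK.le
  have hΔ : S + cμ * K ≤ 2 * cμ ^ 8 * K := by
    nlinarith [two_mul_pow_four_mul_one_add_sq_add_le hc1 hc2]
  obtain ⟨G, hG, hstop⟩ := (h.ae_exists_stopping_radius hc hf hosc hR hS
    (by nlinarith : S ≤ t + 2 * cμ ^ 8 * K)).exists_mem
  choose! σ hσ hσS hσS' using fun x (hx : x ∈ E ∩ G) => hstop x hx.2 hx.1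
  have := h.secondCountableTopology hc
  obtain ⟨u, huEG, hu, hudisj, hucover⟩ := exists_countable_disjoint_closedBall_cover _ _ _ hσ
  have := hu.to_subtype
  have hcover : E ∩ G ⊆ ⋃ b ∈ u, oscLevelSet μ f b (4 * σ b) t := fun x hx => by
    obtain ⟨b, hbu, hxb⟩ := hucover x hx
    exact mem_biUnion hbu (h.mem_oscLevelSet_of_setAverage_le hc.le hf hosc (hσ b (huEG hbu)).1
      hΔ hxb hx.1.2 (hσS' b (huEG hbu)))
  have hsub : ∀ b ∈ u, closedBall b (σ b) ⊆ ball x₀ (4 * R) := fun b hb z hz => by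
    have hbx₀ := (huEG hb).1.1
    rw [mem_closedBall] at hz
    rw [mem_ball] at hbx₀ ⊢
    linarith [dist_triangle z b x₀, (hσ b (huEG hb)).2]
  calc μ E = μ (E ∩ G) := (measure_inter_conull hG).symm
    _ ≤ ∑' b : u, μ (oscLevelSet μ f b (4 * σ b) t) :=
        (measure_mono hcover).trans (measure_biUnion_le μ hu _)
    _ ≤ ∑' b : u, a * μ (ball b (4 * σ b)) :=
        ENNReal.tsum_le_tsum fun b => hind b _ (by linarith [(hσ b (huEG b.2)).1])
    _ = a * ∑' b : u, μ (ball b (4 * σ b)) := ENNReal.tsum_mul_left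
    _ ≤ a * (2⁻¹ * μ (ball x₀ R)) := by
        gcongr
        exact h.tsum_measure_ball_le hc hf hosc hK hR (fun b hb => (hσ b (huEG hb)).1) hudisj hsub
          fun b hb => (hσS b (huEG hb)).le

theorem measure_oscLevelSet_le [BorelSpace X] (h : IsDoubling μ cμ) (hc : 0 < cμ)
    (hc2 : 2 ≤ cμ ^ 2) (hf : ∀ x r, IntegrableOn f (ball x r) μ) (hosc : MeanOscillationLE μ f K)
    (hK : 0 < K) (n : ℕ) {x₀ : X} {R : ℝ} (hR : 0 < R) :
    μ (oscLevelSet μ f x₀ R (n * (2 * cμ ^ 8 * K))) ≤ 2⁻¹ ^ n * μ (ball x₀ R) := by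
  induction n generalizing x₀ R with
  | zero =>
    rw [Nat.cast_zero, zero_mul, pow_zero, one_mul]
    exact measure_mono (sep_subset _ _)
  | succ n ih =>
    rw [Nat.cast_succ, add_one_mul]
    refine (h.measure_oscLevelSet_add_le hc hc2 hf hosc hK (by positivity) (fun _ _ => ih)
      hR).trans_eq ?_
    rw [pow_succ, mul_assoc]

end IsDoubling

end Doubling

theorem inv_two_pow_floor_le (x : ℝ) :
    (2⁻¹ : ℝ) ^ ⌊x⌋₊ ≤ 2 * Real.exp (-(Real.log 2 * x)) := by
  have h1 : (2⁻¹ : ℝ) ^ ⌊x⌋₊ = 2 ^ (-(⌊x⌋₊ : ℝ)) := by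
    rw [Real.rpow_neg zero_le_two, Real.rpow_natCast, inv_pow]
  have h2 : 2 * Real.exp (-(Real.log 2 * x)) = 2 ^ (1 - x) := by
    rw [Real.rpow_def_of_pos two_pos, mul_sub, mul_one, sub_eq_add_neg, Real.exp_add,
      Real.exp_log two_pos]
  rw [h1, h2]
  exact Real.rpow_le_rpow_of_exponent_le one_le_two (by linarith [Nat.lt_floor_add_one x])

theorem inv_two_pow_floor_le_mul_exp {c K lam : ℝ} (hc : 1 ≤ c) (hK : 0 < K) :
    (2⁻¹ : ℝ) ^ ⌊lam / (2 * c ^ 8 * K)⌋₊ ≤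
      4 * c ^ 7 * Real.exp (-(Real.log 2 / (2 * c ^ 8)) * lam / K) := by
  have hexp : -(Real.log 2 / (2 * c ^ 8)) * lam / K = -(Real.log 2 * (lam / (2 * c ^ 8 * K))) := by
    field_simp
  rw [hexp]
  refine (inv_two_pow_floor_le _).trans (mul_le_mul_of_nonneg_right ?_ (Real.exp_pos _).le)
  nlinarith [one_le_pow₀ (n := 7) hc]

/-- For `K = ‖f‖_♯ = 0` the exponent is `0`, since `x / 0 = 0`. -/
theorem one_le_mul_exp_of_nonpos {c K lam : ℝ} (hc : 1 ≤ c) (hlam : 0 ≤ lam) (hK : K ≤ 0) :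
    1 ≤ 4 * c ^ 7 * Real.exp (-(Real.log 2 / (2 * c ^ 8)) * lam / K) := by
  have hexp : 1 ≤ Real.exp (-(Real.log 2 / (2 * c ^ 8)) * lam / K) := by
    refine Real.one_le_exp (div_nonneg_of_nonpos ?_ hK)
    have : 0 < Real.log 2 / (2 * c ^ 8) := by positivity
    nlinarith
  nlinarith [one_le_pow₀ (n := 7) hc]

/-- The John–Nirenberg inequality for BMO in a doubling metric measure
space: if `f ∈ BMO(X)`, then for every ball `B` and every `λ > 0`,
`μ({x ∈ B : |f(x) - f_B| > λ}) ≤ c₁ μ(B) exp(-c₂ λ / ‖f‖_♯)` with `c₁ = 4 cμ⁷` and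
`c₂ = log 2 / (2 cμ⁸)`. -/
theorem john_nirenberg_bmo {X : Type*} [MetricSpace X] [MeasurableSpace X] [BorelSpace X]
    (μ : Measure X) (cμ : ℝ) (hcμ : 1 ≤ cμ) (hdoub : IsDoubling μ cμ)
    (f : X → ℝ) (hloc : ∀ (x : X) (r : ℝ), IntegrableOn f (Metric.ball x r) μ)
    (hbmo : BddAbove (oscSet μ f)) :
    ∀ (x₀ : X) (R : ℝ), 0 < R → ∀ lam : ℝ, 0 < lam →
      μ {x ∈ Metric.ball x₀ R | lam < |f x - ⨍ y in Metric.ball x₀ R, f y ∂μ|}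
        ≤ ENNReal.ofReal (4 * cμ ^ 7 *
            Real.exp (-(Real.log 2 / (2 * cμ ^ 8)) * lam / bmoSeminorm μ f)) *
          μ (Metric.ball x₀ R) := by
  intro x₀ R hR lam hlam
  change μ (oscLevelSet μ f x₀ R lam) ≤ _
  set K := bmoSeminorm μ f
  have hc : 0 < cμ := by linarith
  rcases le_or_gt K 0 with hK | hK
  · exact (measure_mono (sep_subset _ _)).trans (le_mul_of_one_le_left zero_le
      (ENNReal.one_le_ofReal.2 (one_le_mul_exp_of_nonpos hcμ hlam.le hK)))
  rcases lt_or_ge (cμ ^ 2) 2 with hc2 | hc2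
  · have := hdoub.subsingleton_of_sq_lt_two hc.le hc2
    rw [oscLevelSet_eq_empty (hdoub.measure_ball_pos x₀ hR).ne'
      (hdoub.measure_ball_lt_top x₀ R).ne hlam.le, measure_empty]
    exact zero_le
  set n := ⌊lam / (2 * cμ ^ 8 * K)⌋₊
  have hn : n * (2 * cμ ^ 8 * K) ≤ lam :=
    (le_div_iff₀ (by positivity)).1 (Nat.floor_le (by positivity))
  calc μ (oscLevelSet μ f x₀ R lam) ≤ μ (oscLevelSet μ f x₀ R (n * (2 * cμ ^ 8 * K))) :=
        measure_mono fun y hy => ⟨hy.1, hn.trans_lt hy.2⟩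
    _ ≤ 2⁻¹ ^ n * μ (ball x₀ R) :=
        hdoub.measure_oscLevelSet_le hc hc2 hloc (meanOscillationLE_bmoSeminorm hbmo) hK n hR
    _ ≤ _ := by
        gcongr
        rw [← ENNReal.ofReal_ofNat 2, ← ENNReal.ofReal_inv_of_pos two_pos,
          ← ENNReal.ofReal_pow (by norm_num)]
        exact ENNReal.ofReal_le_ofReal (inv_two_pow_floor_le_mul_exp hcμ hK)
end

section
/- Let $(X,d,\mu)$ be a doubling metric measure space with doubling constant $c_\mu$, let $f\in\mathrm{BMO}(X)$ with $\|f\|_\sharp\le 1$, fix a ball $B_0$ with $f_{B_0}=0$, and let $\lambda>\gamma\ge 2c_\mu^8$. Let $\{B_j(\lambda)\}_j$ and $\{B_k(\gamma)\}_k$ be families of Calderón–Zygmund balls for $|f|$ at levels $\lambda$ and $\gamma$ relative to $B_0$, such that every $B_j(\lambda)$ is contained in $5B_k(\gamma)$ for some $k$. Then $(\lambda-\gamma)\sum_j\mu(B_j(\lambda)) \le c_\mu^3\sum_k\mu(B_k(\gamma))$. -/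
open MeasureTheory Metric Set ENNReal

/-- `{B i = ball (c i) (r i)}_{i ∈ S}` is a family of Calderón–Zygmund balls for the
nonnegative function `g` at level `lam` relative to the ball `B₀ = B(x₀, R)`:
a countable family of pairwise disjoint balls centered at points of `B₀` with
`5Bᵢ ⊆ 11B₀`, such that `g ≤ lam` a.e. on `B₀ \ ⋃ᵢ 5Bᵢ`,
`lam < ⨍_{Bᵢ} g ≤ cμ³ lam` and `cμ⁻³ lam < ⨍_{5Bᵢ} g ≤ lam`. -/
def IsCZBalls {X : Type*} [MetricSpace X] [MeasurableSpace X]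
    (μ : Measure X) (cμ : ℝ) (g : X → ℝ) (x₀ : X) (R lam : ℝ)
    (S : Set ℕ) (c : ℕ → X) (r : ℕ → ℝ) : Prop :=
  (∀ i ∈ S, 0 < r i) ∧
  (∀ i ∈ S, c i ∈ Metric.ball x₀ R) ∧
  (∀ i ∈ S, Metric.ball (c i) (5 * r i) ⊆ Metric.ball x₀ (11 * R)) ∧
  (S.PairwiseDisjoint fun i => Metric.ball (c i) (r i)) ∧
  (∀ᵐ x ∂μ, x ∈ Metric.ball x₀ R \ (⋃ i ∈ S, Metric.ball (c i) (5 * r i)) → g x ≤ lam) ∧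
  (∀ i ∈ S, lam < ⨍ x in Metric.ball (c i) (r i), g x ∂μ ∧
      ⨍ x in Metric.ball (c i) (r i), g x ∂μ ≤ cμ ^ 3 * lam) ∧
  (∀ i ∈ S, lam / cμ ^ 3 < ⨍ x in Metric.ball (c i) (5 * r i), g x ∂μ ∧
      ⨍ x in Metric.ball (c i) (5 * r i), g x ∂μ ≤ lam)

/-! Each ball `B_j(λ)` lies in some `5B_k(γ)`, and `|f_{5B_k}| ≤ ⨍_{5B_k} |f| ≤ γ`, so
`|f - f_{5B_k}|` has mean at least `λ - γ` on `B_j`. The balls `B_j` are disjoint, so summing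
over those inside a fixed `5B_k` is bounded by `∫_{5B_k} |f - f_{5B_k}| ≤ μ(5B_k)` (as
`‖f‖_♯ ≤ 1`), and doubling gives `μ(5B_k) ≤ c_μ³ μ(B_k)`. -/

namespace IsDoubling

variable {X : Type*} [MetricSpace X] [MeasurableSpace X] {μ : Measure X} {cμ : ℝ}

lemma measure_ball_ne_top (h : IsDoubling μ cμ) (x : X) {r : ℝ} (hr : 0 < r) :
    μ (ball x r) ≠ ∞ :=
  (h.1 x r hr).2.ne

lemma nonneg [Nonempty X] (h : IsDoubling μ cμ) : 0 ≤ cμ := by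
  by_contra! hneg
  obtain ⟨x⟩ := ‹Nonempty X›
  have h2 := h.2 x 1 one_pos
  rw [ENNReal.ofReal_of_nonpos hneg.le, zero_mul, nonpos_iff_eq_zero] at h2
  exact (h.1 x (2 * 1) (by norm_num)).1.ne' h2

lemma measure_ball_two_pow_mul_le (h : IsDoubling μ cμ) (x : X) {r : ℝ} (hr : 0 < r) (n : ℕ) :
    μ (ball x (2 ^ n * r)) ≤ ENNReal.ofReal cμ ^ n * μ (ball x r) := by
  induction n with
  | zero => simp
  | succ n ih =>
    calc μ (ball x (2 ^ (n + 1) * r)) = μ (ball x (2 * (2 ^ n * r))) := by ring_nf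
      _ ≤ ENNReal.ofReal cμ * μ (ball x (2 ^ n * r)) := h.2 x _ (by positivity)
      _ ≤ ENNReal.ofReal cμ * (ENNReal.ofReal cμ ^ n * μ (ball x r)) := by gcongr
      _ = ENNReal.ofReal cμ ^ (n + 1) * μ (ball x r) := by ring

lemma measure_ball_five_mul_le (h : IsDoubling μ cμ) (x : X) {r : ℝ} (hr : 0 < r) :
    μ (ball x (5 * r)) ≤ ENNReal.ofReal (cμ ^ 3) * μ (ball x r) := by
  have : Nonempty X := ⟨x⟩
  rw [ENNReal.ofReal_pow h.nonneg]
  calc μ (ball x (5 * r)) ≤ μ (ball x (2 ^ 3 * r)) :=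
        measure_mono (ball_subset_ball (by linarith))
    _ ≤ ENNReal.ofReal cμ ^ 3 * μ (ball x r) := h.measure_ball_two_pow_mul_le x hr 3

end IsDoubling

section SetAverage

variable {X : Type*} [MeasurableSpace X] {μ : Measure X} {s : Set X}

lemma abs_setAverage_le_setAverage_abs (f : X → ℝ) :
    |⨍ x in s, f x ∂μ| ≤ ⨍ x in s, |f x| ∂μ := by
  simpa only [average, Real.norm_eq_abs] using norm_integral_le_integral_norm f

lemma setLIntegral_ofReal_eq_ofReal_setAverage_mul {g : X → ℝ} (hg : IntegrableOn g s μ)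
    (hg₀ : 0 ≤ᵐ[μ.restrict s] g) (hs : μ s ≠ ∞) :
    ∫⁻ x in s, ENNReal.ofReal (g x) ∂μ = ENNReal.ofReal (⨍ x in s, g x ∂μ) * μ s := by
  rcases eq_or_ne (μ s) 0 with h₀ | h₀
  · simp [Measure.restrict_eq_zero.mpr h₀, h₀]
  · rw [ofReal_setAverage hg hg₀, ENNReal.div_mul_cancel h₀ hs]

lemma setLIntegral_ofReal_le_of_setAverage_le {g : X → ℝ} {t : ℝ} (hg : IntegrableOn g s μ)
    (hg₀ : 0 ≤ᵐ[μ.restrict s] g) (hs : μ s ≠ ∞) (ht : ⨍ x in s, g x ∂μ ≤ t) :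
    ∫⁻ x in s, ENNReal.ofReal (g x) ∂μ ≤ ENNReal.ofReal t * μ s := by
  rw [setLIntegral_ofReal_eq_ofReal_setAverage_mul hg hg₀ hs]
  gcongr

lemma ofReal_sub_mul_le_setLIntegral_abs_sub {f : X → ℝ} {lam γ a : ℝ}
    (hf : IntegrableOn f s μ) (hs : μ s ≠ ∞) (hlam : lam ≤ ⨍ x in s, |f x| ∂μ)
    (ha : |a| ≤ γ) :
    ENNReal.ofReal (lam - γ) * μ s ≤ ∫⁻ x in s, ENNReal.ofReal |f x - a| ∂μ := by
  have hγ : 0 ≤ γ := (abs_nonneg a).trans ha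
  have hmass : ENNReal.ofReal lam * μ s
      ≤ ∫⁻ x in s, ENNReal.ofReal |f x - a| ∂μ + ENNReal.ofReal γ * μ s :=
    calc ENNReal.ofReal lam * μ s ≤ ENNReal.ofReal (⨍ x in s, |f x| ∂μ) * μ s := by gcongr
      _ = ∫⁻ x in s, ENNReal.ofReal |f x| ∂μ :=
        (setLIntegral_ofReal_eq_ofReal_setAverage_mul hf.abs
          (Filter.Eventually.of_forall fun _ => abs_nonneg _) hs).symm
      _ ≤ ∫⁻ x in s, (ENNReal.ofReal |f x - a| + ENNReal.ofReal γ) ∂μ := by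
        refine lintegral_mono fun x => ?_
        rw [← ENNReal.ofReal_add (abs_nonneg _) hγ]
        refine ENNReal.ofReal_le_ofReal ?_
        linarith [abs_sub_abs_le_abs_sub (f x) a]
      _ = ∫⁻ x in s, ENNReal.ofReal |f x - a| ∂μ + ENNReal.ofReal γ * μ s := by
        rw [lintegral_add_right _ measurable_const, setLIntegral_const]
  rw [ENNReal.ofReal_sub _ hγ, ENNReal.sub_mul fun _ _ => hs]
  exact tsub_le_iff_right.2 hmass

end SetAverage

lemma tsum_setLIntegral_le_tsum_setLIntegral_of_subset {X ι κ : Type*} [MeasurableSpace X]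
    {μ : Measure X} [Countable ι] {s : ι → Set X} (hs : ∀ i, MeasurableSet (s i))
    (hd : Pairwise (Function.onFun Disjoint s)) (t : κ → Set X) (p : ι → κ)
    (hst : ∀ i, s i ⊆ t (p i)) (g : κ → X → ℝ≥0∞) :
    ∑' i, ∫⁻ x in s i, g (p i) x ∂μ ≤ ∑' k, ∫⁻ x in t k, g k x ∂μ := by
  have hfiber (k : κ) :
      ∑' i : p ⁻¹' {k}, ∫⁻ x in s i, g k x ∂μ ≤ ∫⁻ x in t k, g k x ∂μ := by
    rw [← lintegral_iUnion (fun i : p ⁻¹' {k} => hs i)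
      fun i i' hne => hd (Subtype.coe_ne_coe.2 hne)]
    exact lintegral_mono_set (iUnion_subset fun i => (hst i).trans_eq (congrArg t i.2))
  calc ∑' i, ∫⁻ x in s i, g (p i) x ∂μ
      = ∑' (k) (i : p ⁻¹' {k}), ∫⁻ x in s i, g (p i) x ∂μ :=
        (ENNReal.tsum_fiberwise _ p).symm
    _ = ∑' (k) (i : p ⁻¹' {k}), ∫⁻ x in s i, g k x ∂μ :=
        tsum_congr fun k => tsum_congr fun i => by rw [i.2]
    _ ≤ ∑' k, ∫⁻ x in t k, g k x ∂μ := ENNReal.tsum_le_tsum hfiber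

theorem bmo_good_lambda_step_general {X : Type*} [MetricSpace X] [MeasurableSpace X] [BorelSpace X]
    (μ : Measure X) (cμ : ℝ) (hdoub : IsDoubling μ cμ)
    (f : X → ℝ) (hloc : ∀ (x : X) (r : ℝ), IntegrableOn f (Metric.ball x r) μ)
    (hbmo : ∀ (x : X) (r : ℝ), 0 < r →
      ⨍ y in Metric.ball x r, |f y - ⨍ z in Metric.ball x r, f z ∂μ| ∂μ ≤ 1)
    (x₀ : X) (R : ℝ)
    (lam γ : ℝ)
    (Sl Sg : Set ℕ) (cl cg : ℕ → X) (rl rg : ℕ → ℝ)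
    (hCZl : IsCZBalls μ cμ (fun x => |f x|) x₀ R lam Sl cl rl)
    (hCZg : IsCZBalls μ cμ (fun x => |f x|) x₀ R γ Sg cg rg)
    (hnest : ∀ j ∈ Sl, ∃ k ∈ Sg,
      Metric.ball (cl j) (rl j) ⊆ Metric.ball (cg k) (5 * rg k)) :
    ENNReal.ofReal (lam - γ) * ∑' j : Sl, μ (Metric.ball (cl j.1) (rl j.1))
      ≤ ENNReal.ofReal (cμ ^ 3) * ∑' k : Sg, μ (Metric.ball (cg k.1) (rg k.1)) := by
  obtain ⟨hrl, -, -, hdisjl, -, havgl, -⟩ := hCZl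
  obtain ⟨hrg, -, -, -, -, -, havg5g⟩ := hCZg
  have hparent (j : Sl) : ∃ k : Sg, ball (cl j) (rl j) ⊆ ball (cg k) (5 * rg k) :=
    let ⟨k, hk, hsub⟩ := hnest j j.2; ⟨⟨k, hk⟩, hsub⟩
  choose κ hκ using hparent
  set a : Sg → ℝ := fun k => ⨍ z in ball (cg k) (5 * rg k), f z ∂μ
  have hlower (j : Sl) (k : Sg) : ENNReal.ofReal (lam - γ) * μ (ball (cl j) (rl j))
      ≤ ∫⁻ x in ball (cl j) (rl j), ENNReal.ofReal |f x - a k| ∂μ :=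
    ofReal_sub_mul_le_setLIntegral_abs_sub (hloc _ _)
      (hdoub.measure_ball_ne_top _ (hrl j j.2)) (havgl j j.2).1.le
      ((abs_setAverage_le_setAverage_abs f).trans (havg5g k k.2).2)
  have hupper (k : Sg) : ∫⁻ x in ball (cg k) (5 * rg k), ENNReal.ofReal |f x - a k| ∂μ
      ≤ μ (ball (cg k) (5 * rg k)) := by
    have h5 : 0 < 5 * rg k := by linarith [hrg k k.2]
    have hfin := hdoub.measure_ball_ne_top (cg k) h5
    simpa only [ENNReal.ofReal_one, one_mul] using
      setLIntegral_ofReal_le_of_setAverage_le (g := fun x => |f x - a k|)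
        ((hloc _ _).sub (integrableOn_const hfin)).abs
        (Filter.Eventually.of_forall fun _ => abs_nonneg _) hfin (hbmo _ _ h5)
  calc ENNReal.ofReal (lam - γ) * ∑' j : Sl, μ (ball (cl j) (rl j))
      = ∑' j : Sl, ENNReal.ofReal (lam - γ) * μ (ball (cl j) (rl j)) :=
        ENNReal.tsum_mul_left.symm
    _ ≤ ∑' j : Sl, ∫⁻ x in ball (cl j) (rl j), ENNReal.ofReal |f x - a (κ j)| ∂μ :=
        ENNReal.tsum_le_tsum fun j => hlower j (κ j)
    _ ≤ ∑' k : Sg, ∫⁻ x in ball (cg k) (5 * rg k), ENNReal.ofReal |f x - a k| ∂μ :=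
        tsum_setLIntegral_le_tsum_setLIntegral_of_subset
          (s := fun j : Sl => ball (cl j) (rl j)) (fun _ => measurableSet_ball)
          (fun i i' hne => hdisjl i.2 i'.2 (Subtype.coe_ne_coe.2 hne)) _ κ hκ
          fun k x => ENNReal.ofReal |f x - a k|
    _ ≤ ∑' k : Sg, μ (ball (cg k) (5 * rg k)) := ENNReal.tsum_le_tsum hupper
    _ ≤ ∑' k : Sg, ENNReal.ofReal (cμ ^ 3) * μ (ball (cg k) (rg k)) :=
        ENNReal.tsum_le_tsum fun k => hdoub.measure_ball_five_mul_le _ (hrg k k.2)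
    _ = ENNReal.ofReal (cμ ^ 3) * ∑' k : Sg, μ (ball (cg k) (rg k)) := ENNReal.tsum_mul_left

/-- Good-λ estimate for BMO: if `‖f‖_♯ ≤ 1`, `f_{B₀} = 0`,
`λ > γ ≥ 2 cμ⁸`, and `{B j(λ)}`, `{B k(γ)}` are Calderón–Zygmund families for `|f|` at
levels `λ` and `γ` relative to `B₀` such that every `B j(λ)` is contained in some
`5 B k(γ)`, then `(λ - γ) ∑ⱼ μ(B j(λ)) ≤ cμ³ ∑ₖ μ(B k(γ))`. -/
theorem bmo_good_lambda_step {X : Type*} [MetricSpace X] [MeasurableSpace X] [BorelSpace X]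
    (μ : Measure X) (cμ : ℝ) (hcμ : 1 ≤ cμ) (hdoub : IsDoubling μ cμ)
    (f : X → ℝ) (hloc : ∀ (x : X) (r : ℝ), IntegrableOn f (Metric.ball x r) μ)
    (hbmo : ∀ (x : X) (r : ℝ), 0 < r →
      ⨍ y in Metric.ball x r, |f y - ⨍ z in Metric.ball x r, f z ∂μ| ∂μ ≤ 1)
    (x₀ : X) (R : ℝ) (hR : 0 < R)
    (hmean : ⨍ y in Metric.ball x₀ R, f y ∂μ = 0)
    (lam γ : ℝ) (hγ : 2 * cμ ^ 8 ≤ γ) (hlamγ : γ < lam)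
    (Sl Sg : Set ℕ) (cl cg : ℕ → X) (rl rg : ℕ → ℝ)
    (hCZl : IsCZBalls μ cμ (fun x => |f x|) x₀ R lam Sl cl rl)
    (hCZg : IsCZBalls μ cμ (fun x => |f x|) x₀ R γ Sg cg rg)
    (hnest : ∀ j ∈ Sl, ∃ k ∈ Sg,
      Metric.ball (cl j) (rl j) ⊆ Metric.ball (cg k) (5 * rg k)) :
    ENNReal.ofReal (lam - γ) * ∑' j : Sl, μ (Metric.ball (cl j.1) (rl j.1))
      ≤ ENNReal.ofReal (cμ ^ 3) * ∑' k : Sg, μ (Metric.ball (cg k.1) (rg k.1)) :=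
  bmo_good_lambda_step_general μ cμ hdoub f hloc hbmo x₀ R lam γ Sl Sg cl cg rl rg hCZl hCZg hnest
end
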